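/- arXiv:2102.13120 — 2 statements merged into one kernel-verified Lean document; each statement's English description precedes it below -/
import Mathlib

section
/- The rational function H(t) = (1 + t^3 + 4t^4 + 2t^5 + 4t^6 + t^7 + t^10) / ((1-t^2)^4 (1-t^3)^3 (1-t^4)) satisfies the Gorenstein functional equation H(1/t) = (-1)^8 · t^11 · H(t) as an identity of rational functions. -/
/-!
Under `t ↦ 1/t` each denominator factor transforms as `1 - t⁻ᵈ = -t⁻ᵈ (1 - tᵈ)`, so the
denominator `∏ᵢ (1 - t^{dᵢ})` picks up `(-1)ⁿ t^{-Σ dᵢ}`, while a palindromic numerator of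
degree `s` picks up `t^{-s}`. Here `n = 8`, `Σ dᵢ = 4·2 + 3·3 + 4 = 21` and `s = 10`,
giving the factor `(-1)⁸ t^{21 - 10}`.
-/

section Reciprocity

variable {K : Type*} [Field K]

lemma one_sub_inv_pow_eq {t : K} (ht : t ≠ 0) (d : ℕ) :
    1 - t⁻¹ ^ d = -t⁻¹ ^ d * (1 - t ^ d) := by
  rw [mul_sub, mul_one, inv_pow, neg_mul, inv_mul_cancel₀ (pow_ne_zero d ht)]
  ring

lemma prod_one_sub_inv_pow {t : K} (ht : t ≠ 0) (ds : List ℕ) :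
    (ds.map fun d => 1 - t⁻¹ ^ d).prod
      = (-1) ^ ds.length * t⁻¹ ^ ds.sum * (ds.map fun d => 1 - t ^ d).prod := by
  induction ds with
  | nil => simp
  | cons d ds ih =>
    simp only [List.map_cons, List.prod_cons, List.length_cons, List.sum_cons, ih,
      one_sub_inv_pow_eq ht d]
    ring

lemma inv_pow_div_neg_one_pow_mul_inv_pow_add {t : K} (ht : t ≠ 0) (n s k : ℕ) :
    t⁻¹ ^ s / ((-1) ^ n * t⁻¹ ^ (s + k)) = (-1) ^ n * t ^ k := by
  rw [pow_add, mul_left_comm, div_mul_cancel_left₀ (pow_ne_zero s (inv_ne_zero ht)), mul_inv,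
    ← inv_pow, inv_neg_one, inv_pow, inv_inv]

theorem div_prod_one_sub_inv_pow {N : K → K} {t : K} (ht : t ≠ 0) (ds : List ℕ) {s : ℕ}
    (hs : s ≤ ds.sum) (hN : N t⁻¹ = t⁻¹ ^ s * N t) :
    N t⁻¹ / (ds.map fun d => 1 - t⁻¹ ^ d).prod
      = (-1) ^ ds.length * t ^ (ds.sum - s) * (N t / (ds.map fun d => 1 - t ^ d).prod) := by
  obtain ⟨k, hk⟩ := Nat.exists_eq_add_of_le hs
  rw [hN, prod_one_sub_inv_pow ht, mul_div_mul_comm, hk, Nat.add_sub_cancel_left,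
    inv_pow_div_neg_one_pow_mul_inv_pow_add ht]

end Reciprocity

theorem hilbert_series_2hdm_gorenstein (H : ℚ → ℚ)
    (hH : ∀ t : ℚ, H t = (1 + t^3 + 4*t^4 + 2*t^5 + 4*t^6 + t^7 + t^10) /
      ((1 - t^2)^4 * (1 - t^3)^3 * (1 - t^4))) :
    ∀ t : ℚ, t ≠ 0 → 1 - t^2 ≠ 0 →
      H (1 / t) = (-1)^8 * t^11 * H t := by
  intro t ht _
  have hden : ∀ u : ℚ, (1 - u^2)^4 * (1 - u^3)^3 * (1 - u^4)
      = ([2, 2, 2, 2, 3, 3, 3, 4].map fun d => 1 - u ^ d).prod := by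
    intro u
    simp only [List.map_cons, List.map_nil, List.prod_cons, List.prod_nil]
    ring
  have hnum : (1 + t⁻¹^3 + 4*t⁻¹^4 + 2*t⁻¹^5 + 4*t⁻¹^6 + t⁻¹^7 + t⁻¹^10)
      = t⁻¹ ^ 10 * (1 + t^3 + 4*t^4 + 2*t^5 + 4*t^6 + t^7 + t^10) := by
    field_simp
    ring
  rw [one_div, hH, hH, hden, hden]
  exact div_prod_one_sub_inv_pow (N := fun u => 1 + u^3 + 4*u^4 + 2*u^5 + 4*u^6 + u^7 + u^10)
    ht [2, 2, 2, 2, 3, 3, 3, 4] (by decide) hnum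
end

section
/- For the rational function H(t) = (1 + t^3 + 4t^4 + 2t^5 + 4t^6 + t^7 + t^10) / ((1-t^2)^4 (1-t^3)^3 (1-t^4)), the limit as t → 1 of (1-t)^8 · H(t) equals 7/864, and the Laurent expansion of H at t = 1 is H(t) = (7/864)/(1-t)^8 + (7/576)/(1-t)^7 + O((1-t)^{-6}). -/
/-!
The denominator factors as `(1 - t)^8 * Q t` with `Q = (1+t)^4 (1+t+t^2)^3 (1+t+t^2+t^3)`, so
`H t = f t / (1 - t)^8` with `f = N / Q` smooth near `1`. The two leading Laurent coefficients
are then `f 1 = 14 / 1728` and `-f' 1`, which the logarithmic derivative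
`f'/f = N'/N - Q'/Q = 70/14 - (4/2 + 3·3/3 + 6/4)` at `1` gives as `(7/864)·(3/2) = 7/576`.
-/

open Filter Topology Polynomial

theorem HasDerivAt.tendsto_leading_laurent_coeffs {H f : ℝ → ℝ} {a f' : ℝ} {n : ℕ}
    (hf : HasDerivAt f f' a) (hH : ∀ t, H t = f t / (a - t) ^ (n + 1)) :
    Tendsto (fun t => (a - t) ^ (n + 1) * H t) (𝓝[≠] a) (𝓝 (f a)) ∧
    Tendsto (fun t => (a - t) ^ n * (H t - f a / (a - t) ^ (n + 1))) (𝓝[≠] a) (𝓝 (-f')) := by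
  have hne : ∀ᶠ t in 𝓝[≠] a, a - t ≠ 0 :=
    eventually_mem_nhdsWithin.mono fun t ht => sub_ne_zero.2 (Ne.symm ht)
  constructor
  · refine (hf.continuousAt.tendsto.mono_left nhdsWithin_le_nhds).congr' ?_
    filter_upwards [hne] with t ht
    rw [hH]
    field_simp
  · refine (hasDerivAt_iff_tendsto_slope.1 hf).neg.congr' ?_
    filter_upwards [hne] with t ht
    have ht' : t - a ≠ 0 := fun h => ht (by linarith)
    rw [hH, slope_def_field]
    field_simp
    ring

namespace TwoHDM

noncomputable def numerator : ℝ[X] := 1 + X^3 + 4*X^4 + 2*X^5 + 4*X^6 + X^7 + X^10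

noncomputable def cofactor : ℝ[X] := (1 + X)^4 * (1 + X + X^2)^3 * (1 + X + X^2 + X^3)

theorem denominator_eq_one_sub_pow_mul_cofactor (t : ℝ) :
    (1 - t^2)^4 * (1 - t^3)^3 * (1 - t^4) = (1 - t)^8 * cofactor.eval t := by
  simp only [cofactor, eval_mul, eval_pow, eval_add, eval_one, eval_X]
  ring

theorem eval_one_numerator_div_cofactor : numerator.eval 1 / cofactor.eval 1 = 7 / 864 := by
  norm_num [numerator, cofactor]

theorem hasDerivAt_numerator_div_cofactor :
    HasDerivAt (fun t => numerator.eval t / cofactor.eval t) (-(7 / 576)) 1 := by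
  have hQ : cofactor.eval 1 ≠ 0 := by norm_num [cofactor]
  refine ((numerator.hasDerivAt 1).fun_div (cofactor.hasDerivAt 1) hQ).congr_deriv ?_
  norm_num [numerator, cofactor, derivative_mul, derivative_pow]

end TwoHDM

open TwoHDM in
theorem hilbert_series_2hdm_laurent (H : ℝ → ℝ)
    (hH : ∀ t : ℝ, H t = (1 + t^3 + 4*t^4 + 2*t^5 + 4*t^6 + t^7 + t^10) /
      ((1 - t^2)^4 * (1 - t^3)^3 * (1 - t^4))) :
    Tendsto (fun t : ℝ => (1 - t)^8 * H t) (𝓝[≠] 1) (𝓝 (7/864)) ∧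
    Tendsto (fun t : ℝ => (1 - t)^7 * (H t - (7/864) / (1 - t)^8)) (𝓝[≠] 1)
      (𝓝 (7/576)) := by
  have hH' : ∀ t, H t = numerator.eval t / cofactor.eval t / (1 - t) ^ (7 + 1) := fun t => by
    rw [hH, denominator_eq_one_sub_pow_mul_cofactor, div_div]
    simp only [numerator, eval_add, eval_mul, eval_pow, eval_one, eval_X, eval_ofNat]
    ring
  have h := hasDerivAt_numerator_div_cofactor.tendsto_leading_laurent_coeffs hH'
  rw [eval_one_numerator_div_cofactor, neg_neg] at h
  exact h
end
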